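/- arXiv:2508.09872 — 2 statements merged into one kernel-verified Lean document; each statement's English description precedes it below -/
import Mathlib

section
/- If a ∈ (ℕ*)^ℤ is a bi-infinite sequence whose Markov value satisfies m(a) ≤ √12, then every entry of a belongs to {1,2}; conversely every a ∈ {1,2}^ℤ has m(a) ≤ √12. In particular a periodic orbit containing the digit 3 has Markov value at least √13 > √12. -/
open Filter

/-- The `n`-th convergent of the continued fraction `[a 0; a 1, a 2, ...]`. -/
noncomputable def cfConv : ℕ → (ℕ → ℕ) → ℝ
  | 0, a => a 0
  | n+1, a => a 0 + 1 / cfConv n (fun i => a (i+1))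

/-- Value of the infinite continued fraction `[a 0; a 1, a 2, ...]` (limit of convergents). -/
noncomputable def cfVal (a : ℕ → ℕ) : ℝ := limUnder atTop (fun n => cfConv n a)

/-- `λ_k(a) = [a_k; a_{k+1}, …] + [0; a_{k-1}, a_{k-2}, …]`. -/
noncomputable def lam (a : ℤ → ℕ) (k : ℤ) : ℝ :=
  cfVal (fun n => a (k + n)) + (cfVal (fun n => a (k - 1 - n)))⁻¹

/-- The Markov value `m(a) = sup_k λ_k(a)`. -/
noncomputable def markov (a : ℤ → ℕ) : ℝ := ⨆ k : ℤ, lam a k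

lemma cfConv_zero (b : ℕ → ℕ) : cfConv 0 b = b 0 := rfl

lemma cfConv_succ (n : ℕ) (b : ℕ → ℕ) :
    cfConv (n + 1) b = b 0 + 1 / cfConv n (fun i => b (i + 1)) := rfl

lemma one_le_cfConv : ∀ (n : ℕ) (b : ℕ → ℕ), (∀ i, 0 < b i) → 1 ≤ cfConv n b := by
  intro n
  induction n with
  | zero => intro b hb; rw [cfConv_zero]; exact_mod_cast hb 0
  | succ n ih =>
    intro b hb
    rw [cfConv_succ]
    have h1 : 1 ≤ cfConv n (fun i => b (i+1)) := ih _ (fun i => hb (i+1))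
    have h0 : (1:ℝ) ≤ (b 0 : ℝ) := by exact_mod_cast hb 0
    have h2 : (0:ℝ) < 1 / cfConv n (fun i => b (i+1)) := by positivity
    linarith

lemma cfConv_pos (n : ℕ) (b : ℕ → ℕ) (hb : ∀ i, 0 < b i) : 0 < cfConv n b :=
  lt_of_lt_of_le one_pos (one_le_cfConv n b hb)

lemma head_le_cfConv (n : ℕ) (b : ℕ → ℕ) (hb : ∀ i, 0 < b i) : (b 0 : ℝ) ≤ cfConv n b := by
  cases n with
  | zero => rw [cfConv_zero]
  | succ n =>
    rw [cfConv_succ]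
    have h1 : 1 ≤ cfConv n (fun i => b (i+1)) := one_le_cfConv _ _ (fun i => hb (i+1))
    have h2 : (0:ℝ) < 1 / cfConv n (fun i => b (i+1)) := by positivity
    linarith

lemma cfConv_le_head (n : ℕ) (b : ℕ → ℕ) (hb : ∀ i, 0 < b i) : cfConv n b ≤ (b 0 : ℝ) + 1 := by
  cases n with
  | zero => rw [cfConv_zero]; linarith
  | succ n =>
    rw [cfConv_succ]
    have h1 : 1 ≤ cfConv n (fun i => b (i+1)) := one_le_cfConv _ _ (fun i => hb (i+1))
    have h2 : 1 / cfConv n (fun i => b (i+1)) ≤ 1 := by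
      rw [div_le_one (by linarith)]; exact h1
    linarith

lemma cfConv_diff (n : ℕ) (b : ℕ → ℕ) (hb : ∀ i, 0 < b i) :
    cfConv (n+2) b - cfConv (n+1) b =
      -(cfConv (n+1) (fun i => b (i+1)) - cfConv n (fun i => b (i+1))) /
        (cfConv (n+1) (fun i => b (i+1)) * cfConv n (fun i => b (i+1))) := by
  have h1 : 0 < cfConv (n+1) (fun i => b (i+1)) := cfConv_pos _ _ (fun i => hb _)
  have h2 : 0 < cfConv n (fun i => b (i+1)) := cfConv_pos _ _ (fun i => hb _)
  rw [cfConv_succ (n+1) b, cfConv_succ n b]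
  field_simp
  ring

lemma abs_cfConv_diff_le (n : ℕ) (b : ℕ → ℕ) (hb : ∀ i, 0 < b i) :
    |cfConv (n+2) b - cfConv (n+1) b| ≤
      |cfConv (n+1) (fun i => b (i+1)) - cfConv n (fun i => b (i+1))| := by
  have h1 : 0 < cfConv (n+1) (fun i => b (i+1)) := cfConv_pos _ _ (fun i => hb _)
  have h2 : 0 < cfConv n (fun i => b (i+1)) := cfConv_pos _ _ (fun i => hb _)
  have h1' : 1 ≤ cfConv (n+1) (fun i => b (i+1)) := one_le_cfConv _ _ (fun i => hb _)
  have h2' : 1 ≤ cfConv n (fun i => b (i+1)) := one_le_cfConv _ _ (fun i => hb _)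
  rw [cfConv_diff n b hb, abs_div, abs_neg]
  rw [abs_of_pos (mul_pos h1 h2)]
  exact div_le_self (abs_nonneg _) (one_le_mul_of_one_le_of_one_le h1' h2')

lemma cfConv_pair (m : ℕ) : ∀ b : ℕ → ℕ, (∀ i, 0 < b i) →
    |cfConv (2*m+1) b - cfConv (2*m) b| ≤ (1/2 : ℝ)^m ∧
    |cfConv (2*m+2) b - cfConv (2*m+1) b| ≤ (1/2 : ℝ)^m := by
  induction m with
  | zero =>
    intro b hb
    have hb1 : (1:ℝ) ≤ (b 1 : ℝ) := by exact_mod_cast hb 1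
    have he : cfConv 1 b - cfConv 0 b = 1 / (b 1 : ℝ) := by
      rw [cfConv_succ 0 b, cfConv_zero, cfConv_zero]
      ring
    have h0 : |cfConv 1 b - cfConv 0 b| ≤ 1 := by
      rw [he, abs_of_pos (div_pos one_pos (by linarith))]
      rw [div_le_one (by linarith)]; exact hb1
    refine ⟨by simpa using h0, ?_⟩
    have h1 := abs_cfConv_diff_le 0 b hb
    have he' : cfConv 1 (fun i => b (i+1)) - cfConv 0 (fun i => b (i+1)) = 1 / (b 2 : ℝ) := by
      rw [cfConv_succ 0 _, cfConv_zero, cfConv_zero]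
      ring
    have h0' : |cfConv 1 (fun i => b (i+1)) - cfConv 0 (fun i => b (i+1))| ≤ 1 := by
      have hb2 : (1:ℝ) ≤ (b 2 : ℝ) := by exact_mod_cast hb 2
      rw [he', abs_of_pos (div_pos one_pos (by linarith))]
      rw [div_le_one (by linarith)]
      exact hb2
    simpa using h1.trans h0'
  | succ m ih =>
    have heven : ∀ b : ℕ → ℕ, (∀ i, 0 < b i) →
        |cfConv (2*m+3) b - cfConv (2*m+2) b| ≤ (1/2 : ℝ)^(m+1) := by
      intro b hb
      have hbT : ∀ i, 0 < b (i+1) := fun i => hb _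
      have hbT2 : ∀ i, 0 < b (i+1+1) := fun i => hb _
      set A := cfConv (2*m+2) (fun i => b (i+1)) with hA
      set B := cfConv (2*m+1) (fun i => b (i+1)) with hB
      set C := cfConv (2*m+1) (fun i => b (i+1+1)) with hC
      set D := cfConv (2*m) (fun i => b (i+1+1)) with hD
      have e1 : cfConv (2*m+3) b - cfConv (2*m+2) b = -(A - B) / (A * B) :=
        cfConv_diff (2*m+1) b hb
      have e2 : A - B = -(C - D) / (C * D) := cfConv_diff (2*m) (fun i => b (i+1)) hbT
      have hA1 : 1 ≤ A := one_le_cfConv _ _ hbT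
      have hB1 : 1 ≤ B := one_le_cfConv _ _ hbT
      have hC1 : 1 ≤ C := one_le_cfConv _ _ hbT2
      have hD1 : 1 ≤ D := one_le_cfConv _ _ hbT2
      have hAB : (0:ℝ) < A * B := mul_pos (by linarith) (by linarith)
      have hCD : (0:ℝ) < C * D := mul_pos (by linarith) (by linarith)
      have hBD : 2 ≤ B * D := by
        have hBe : B = (b 1 : ℝ) + 1 / D := cfConv_succ (2*m) (fun i => b (i+1))
        have hb1 : (1:ℝ) ≤ (b 1 : ℝ) := by exact_mod_cast hb 1
        have hD0 : (0:ℝ) < D := by linarith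
        have hprod : B * D = (b 1 : ℝ) * D + 1 := by
          rw [hBe]; field_simp
        rw [hprod]
        nlinarith
      have hIH : |C - D| ≤ (1/2:ℝ)^m := (ih _ hbT2).1
      have habs : |cfConv (2*m+3) b - cfConv (2*m+2) b| = |C - D| / (A*B*C*D) := by
        rw [e1, e2, abs_div, abs_neg, abs_div, abs_neg, abs_of_pos hAB, abs_of_pos hCD,
          div_div]
        ring_nf
      rw [habs]
      have hABCD : 2 ≤ A*B*C*D := by
        have hAC : 1 ≤ A*C := one_le_mul_of_one_le_of_one_le hA1 hC1
        have h12 : (1:ℝ)*2 ≤ (A*C)*(B*D) :=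
          mul_le_mul hAC hBD (by norm_num) (by nlinarith)
        nlinarith [h12]
      calc |C - D| / (A*B*C*D)
          ≤ (1/2:ℝ)^m / 2 := div_le_div₀ (by positivity) hIH (by norm_num) hABCD
        _ = (1/2:ℝ)^(m+1) := by ring
    intro b hb
    refine ⟨heven b hb, ?_⟩
    have h1 : |cfConv (2*m+2+2) b - cfConv (2*m+2+1) b| ≤
        |cfConv (2*m+3) (fun i => b (i+1)) - cfConv (2*m+2) (fun i => b (i+1))| :=
      abs_cfConv_diff_le (2*m+2) b hb
    exact h1.trans (heven (fun i => b (i+1)) (fun i => hb _))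

open Topology

lemma cfConv_dist_bound (n : ℕ) (b : ℕ → ℕ) (hb : ∀ i, 0 < b i) :
    |cfConv (n+1) b - cfConv n b| ≤ (1/2 : ℝ)^(n/2) := by
  rcases Nat.even_or_odd n with ⟨m, hm⟩ | ⟨m, hm⟩
  · have hn : n = 2*m := by omega
    subst hn
    have hdiv : 2*m/2 = m := by omega
    rw [hdiv]
    exact (cfConv_pair m b hb).1
  · have hn : n = 2*m+1 := by omega
    subst hn
    have hdiv : (2*m+1)/2 = m := by omega
    rw [hdiv]
    exact (cfConv_pair m b hb).2

lemma cfConv_cauchySeq (b : ℕ → ℕ) (hb : ∀ i, 0 < b i) :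
    CauchySeq (fun n => cfConv n b) := by
  have h2 : (0:ℝ) < Real.sqrt 2 := Real.sqrt_pos.2 (by norm_num)
  have hs : (Real.sqrt 2)⁻¹ ^ 2 = 1/2 := by
    rw [inv_pow, Real.sq_sqrt (by norm_num : (0:ℝ) ≤ 2)]
    norm_num
  have hr : (Real.sqrt 2)⁻¹ < 1 := by
    rw [inv_lt_one_iff₀]
    right
    nlinarith [Real.sq_sqrt (show (0:ℝ) ≤ 2 by norm_num)]
  apply cauchySeq_of_le_geometric ((Real.sqrt 2)⁻¹) 2 hr
  intro n
  rw [Real.dist_eq, abs_sub_comm]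
  refine (cfConv_dist_bound n b hb).trans ?_
  have hsle : Real.sqrt 2 ≤ 2 := by
    nlinarith [Real.sq_sqrt (show (0:ℝ) ≤ 2 by norm_num)]
  rcases Nat.even_or_odd n with ⟨m, hm⟩ | ⟨m, hm⟩
  · have hn : n = 2*m := by omega
    subst hn
    have hdiv : 2*m/2 = m := by omega
    rw [hdiv, pow_mul, hs]
    nlinarith [pow_pos (show (0:ℝ) < 1/2 by norm_num) m]
  · have hn : n = 2*m+1 := by omega
    subst hn
    have hdiv : (2*m+1)/2 = m := by omega
    rw [hdiv, pow_succ, pow_mul, hs]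
    have hp : (0:ℝ) < (1/2:ℝ)^m := pow_pos (by norm_num) m
    have hinv : (1/2:ℝ) ≤ (Real.sqrt 2)⁻¹ := by
      rw [le_inv_comm₀ (by norm_num) h2]
      simpa using hsle
    nlinarith

lemma cfVal_tendsto (b : ℕ → ℕ) (hb : ∀ i, 0 < b i) :
    Tendsto (fun n => cfConv n b) atTop (𝓝 (cfVal b)) := by
  obtain ⟨x, hx⟩ := cauchySeq_tendsto_of_complete (cfConv_cauchySeq b hb)
  have hval : cfVal b = x := hx.limUnder_eq
  rwa [hval]

lemma one_le_cfVal (b : ℕ → ℕ) (hb : ∀ i, 0 < b i) : 1 ≤ cfVal b :=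
  ge_of_tendsto' (cfVal_tendsto b hb) (fun n => one_le_cfConv n b hb)

lemma cfVal_pos (b : ℕ → ℕ) (hb : ∀ i, 0 < b i) : 0 < cfVal b :=
  lt_of_lt_of_le one_pos (one_le_cfVal b hb)

lemma head_le_cfVal (b : ℕ → ℕ) (hb : ∀ i, 0 < b i) : (b 0 : ℝ) ≤ cfVal b :=
  ge_of_tendsto' (cfVal_tendsto b hb) (fun n => head_le_cfConv n b hb)

lemma cfVal_le_head (b : ℕ → ℕ) (hb : ∀ i, 0 < b i) : cfVal b ≤ (b 0 : ℝ) + 1 :=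
  le_of_tendsto' (cfVal_tendsto b hb) (fun n => cfConv_le_head n b hb)

lemma cfVal_rec (b : ℕ → ℕ) (hb : ∀ i, 0 < b i) :
    cfVal b = (b 0 : ℝ) + 1 / cfVal (fun i => b (i + 1)) := by
  have hbt : ∀ i, 0 < b (i+1) := fun i => hb _
  have h1 : Tendsto (fun n => cfConv (n+1) b) atTop (𝓝 (cfVal b)) :=
    (cfVal_tendsto b hb).comp (tendsto_add_atTop_nat 1)
  have ht := cfVal_tendsto (fun i => b (i+1)) hbt
  have hne : cfVal (fun i => b (i+1)) ≠ 0 := ne_of_gt (cfVal_pos _ hbt)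
  have h2 : Tendsto (fun n => cfConv (n+1) b) atTop
      (𝓝 ((b 0 : ℝ) + 1 / cfVal (fun i => b (i+1)))) := by
    simp only [cfConv_succ]
    exact tendsto_const_nhds.add (tendsto_const_nhds.div ht hne)
  exact tendsto_nhds_unique h1 h2

lemma cfValF_rec (a : ℤ → ℕ) (ha : ∀ n, 0 < a n) (k : ℤ) :
    cfVal (fun n : ℕ => a (k + n)) = (a k : ℝ) + 1 / cfVal (fun n : ℕ => a (k + 1 + n)) := by
  have h := cfVal_rec (fun n : ℕ => a (k + n)) (fun i => ha _)
  have e : (fun i : ℕ => a (k + ((i + 1 : ℕ) : ℤ))) = (fun n : ℕ => a (k + 1 + (n : ℤ))) := by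
    funext i; congr 1; push_cast; ring
  rw [h, e]
  norm_num

lemma cfValB_rec (a : ℤ → ℕ) (ha : ∀ n, 0 < a n) (k : ℤ) :
    cfVal (fun n : ℕ => a (k - 1 - n)) =
      (a (k - 1) : ℝ) + 1 / cfVal (fun n : ℕ => a (k - 1 - 1 - n)) := by
  have h := cfVal_rec (fun n : ℕ => a (k - 1 - n)) (fun i => ha _)
  have e : (fun i : ℕ => a (k - 1 - ((i + 1 : ℕ) : ℤ))) =
      (fun n : ℕ => a (k - 1 - 1 - (n : ℤ))) := by
    funext i; congr 1; push_cast; ring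
  rw [h, e]
  norm_num

lemma cfVal_ge_of_le3 (b : ℕ → ℕ) (hb : ∀ i, 0 < b i) (h3 : ∀ i, b i ≤ 3) :
    (24/19 : ℝ) ≤ cfVal b := by
  have hb1 : ∀ i, 0 < b (i+1) := fun i => hb _
  have hb2 : ∀ i, 0 < b (i+1+1) := fun i => hb _
  have hb3 : ∀ i, 0 < b (i+1+1+1) := fun i => hb _
  have h0 : cfVal b = (b 0 : ℝ) + 1 / cfVal (fun i => b (i+1)) := cfVal_rec b hb
  have h1 : cfVal (fun i => b (i+1)) = (b 1 : ℝ) + 1 / cfVal (fun i => b (i+1+1)) :=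
    cfVal_rec _ hb1
  have h2 : cfVal (fun i => b (i+1+1)) = (b 2 : ℝ) + 1 / cfVal (fun i => b (i+1+1+1)) :=
    cfVal_rec _ hb2
  have hv3ub : cfVal (fun i => b (i+1+1+1)) ≤ 4 := by
    have := cfVal_le_head (fun i => b (i+1+1+1)) hb3
    have hle : ((b 3 : ℝ)) ≤ 3 := by exact_mod_cast h3 3
    calc cfVal (fun i => b (i+1+1+1)) ≤ (b 3 : ℝ) + 1 := this
      _ ≤ 4 := by linarith
  have hv3lb : (1:ℝ) ≤ cfVal (fun i => b (i+1+1+1)) := one_le_cfVal _ hb3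
  have hv2lb : (5/4 : ℝ) ≤ cfVal (fun i => b (i+1+1)) := by
    rw [h2]
    have hbb : (1:ℝ) ≤ (b 2 : ℝ) := by exact_mod_cast hb 2
    have : (1/4 : ℝ) ≤ 1 / cfVal (fun i => b (i+1+1+1)) := by
      apply one_div_le_one_div_of_le (by linarith) hv3ub
    linarith
  have hv1ub : cfVal (fun i => b (i+1)) ≤ 19/5 := by
    rw [h1]
    have hbb : ((b 1 : ℝ)) ≤ 3 := by exact_mod_cast h3 1
    have : 1 / cfVal (fun i => b (i+1+1)) ≤ 4/5 := by
      rw [div_le_div_iff₀ (by linarith) (by norm_num)]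
      linarith
    linarith
  have hv1lb : (0:ℝ) < cfVal (fun i => b (i+1)) := cfVal_pos _ hb1
  rw [h0]
  have hbb : (1:ℝ) ≤ (b 0 : ℝ) := by exact_mod_cast hb 0
  have : (5/19 : ℝ) ≤ 1 / cfVal (fun i => b (i+1)) := by
    apply one_div_le_one_div_of_le hv1lb hv1ub |>.trans_eq' ?_
    norm_num
  linarith

lemma cfVal_onetwo_lb (b : ℕ → ℕ) (hb : ∀ n, b n = 1 ∨ b n = 2) :
    (1 + Real.sqrt 3)/2 ≤ cfVal b := by
  classical
  set S : Set ℝ := {x | ∃ c : ℕ → ℕ, (∀ n, c n = 1 ∨ c n = 2) ∧ cfVal c = x} with hSdef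
  have hpos : ∀ c : ℕ → ℕ, (∀ n, c n = 1 ∨ c n = 2) → ∀ i, 0 < c i := by
    intro c hc i; rcases hc i with h | h <;> omega
  have hone : ∀ x ∈ S, (1:ℝ) ≤ x := by
    rintro x ⟨c, hc, rfl⟩
    exact one_le_cfVal c (hpos c hc)
  have hne : S.Nonempty := ⟨cfVal (fun _ => 1), fun _ => 1, fun _ => Or.inl rfl, rfl⟩
  have hbdd : BddBelow S := ⟨1, hone⟩
  set t := sInf S with htdef
  have ht1 : (1:ℝ) ≤ t := le_csInf hne hone
  have ht0 : (0:ℝ) < t := by linarith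
  have hkey : ∀ x ∈ S, 1 + t/(2*t+1) ≤ x := by
    rintro x ⟨c, hc, rfl⟩
    have hc' := hpos c hc
    have h0 : cfVal c = (c 0:ℝ) + 1/cfVal (fun i => c (i+1)) := cfVal_rec c hc'
    have h1 : cfVal (fun i => c (i+1)) = (c 1:ℝ) + 1/cfVal (fun i => c (i+1+1)) :=
      cfVal_rec _ (fun i => hc' _)
    have hmem : cfVal (fun i => c (i+1+1)) ∈ S := ⟨fun i => c (i+1+1), fun i => hc _, rfl⟩
    have htle : t ≤ cfVal (fun i => c (i+1+1)) := csInf_le hbdd hmem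
    have hc1 : (c 1:ℝ) ≤ 2 := by rcases hc 1 with h | h <;> rw [h] <;> norm_num
    have hv1le : cfVal (fun i => c (i+1)) ≤ 2 + 1/t := by
      rw [h1]
      have : 1/cfVal (fun i => c (i+1+1)) ≤ 1/t := one_div_le_one_div_of_le ht0 htle
      linarith
    have hv1pos : 0 < cfVal (fun i => c (i+1)) := cfVal_pos _ (fun i => hc' _)
    have hc0 : (1:ℝ) ≤ (c 0:ℝ) := by exact_mod_cast hc' 0
    have h2t : (0:ℝ) < 2*t+1 := by linarith
    have he : (2 : ℝ) + 1/t = (2*t+1)/t := by field_simp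
    have hv1le' : cfVal (fun i => c (i+1)) ≤ (2*t+1)/t := he ▸ hv1le
    have hfrac : t/(2*t+1) ≤ 1/cfVal (fun i => c (i+1)) := by
      rw [div_le_div_iff₀ h2t hv1pos]
      calc t * cfVal (fun i => c (i+1)) ≤ t * ((2*t+1)/t) := by
            exact mul_le_mul_of_nonneg_left hv1le' (le_of_lt ht0)
        _ = 1 * (2*t+1) := by field_simp
    rw [h0]; linarith
  have ht2 : 1 + t/(2*t+1) ≤ t := le_csInf hne hkey
  have h2t : (0:ℝ) < 2*t+1 := by linarith
  have hdm : t/(2*t+1)*(2*t+1) = t := div_mul_cancel₀ t (ne_of_gt h2t)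
  have hmul : (1 + t/(2*t+1)) * (2*t+1) ≤ t * (2*t+1) :=
    mul_le_mul_of_nonneg_right ht2 (le_of_lt h2t)
  have hq : 0 ≤ 2*t^2 - 2*t - 1 := by nlinarith [hmul, hdm]
  have hs3 : Real.sqrt 3 ^ 2 = 3 := Real.sq_sqrt (by norm_num)
  have hsq : Real.sqrt 3 ≤ 2*t - 1 := by
    have h1 : Real.sqrt 3 ≤ Real.sqrt ((2*t-1)^2) := Real.sqrt_le_sqrt (by nlinarith)
    rwa [Real.sqrt_sq (by linarith)] at h1
  have hfin : (1 + Real.sqrt 3)/2 ≤ t := by linarith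
  exact hfin.trans (csInf_le hbdd ⟨b, hb, rfl⟩)

lemma cfVal_onetwo_ub (b : ℕ → ℕ) (hb : ∀ n, b n = 1 ∨ b n = 2) :
    cfVal b ≤ 1 + Real.sqrt 3 := by
  have hpos : ∀ i, 0 < b i := by intro i; rcases hb i with h | h <;> omega
  have h0 : cfVal b = (b 0:ℝ) + 1/cfVal (fun i => b (i+1)) := cfVal_rec b hpos
  have hlb : (1 + Real.sqrt 3)/2 ≤ cfVal (fun i => b (i+1)) :=
    cfVal_onetwo_lb _ (fun i => hb _)
  have hs3 : Real.sqrt 3 ^ 2 = 3 := Real.sq_sqrt (by norm_num)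
  have hs1 : (1:ℝ) ≤ Real.sqrt 3 := by nlinarith [Real.sqrt_nonneg 3]
  have hv1pos : (0:ℝ) < cfVal (fun i => b (i+1)) := cfVal_pos _ (fun i => hpos _)
  have hinv : 1/cfVal (fun i => b (i+1)) ≤ Real.sqrt 3 - 1 := by
    rw [div_le_iff₀ hv1pos]
    nlinarith
  have hb0 : (b 0:ℝ) ≤ 2 := by rcases hb 0 with h | h <;> rw [h] <;> norm_num
  rw [h0]; linarith

lemma cfValF_ge (a : ℤ → ℕ) (ha : ∀ n, 0 < a n) (k : ℤ) :
    (a k : ℝ) ≤ cfVal (fun n : ℕ => a (k + n)) := by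
  simpa using head_le_cfVal (fun n : ℕ => a (k + n)) (fun i => ha _)

lemma cfValF_le (a : ℤ → ℕ) (ha : ∀ n, 0 < a n) (k : ℤ) :
    cfVal (fun n : ℕ => a (k + n)) ≤ (a k : ℝ) + 1 := by
  simpa using cfVal_le_head (fun n : ℕ => a (k + n)) (fun i => ha _)

lemma cfValF_pos (a : ℤ → ℕ) (ha : ∀ n, 0 < a n) (k : ℤ) :
    0 < cfVal (fun n : ℕ => a (k + n)) := cfVal_pos _ (fun i => ha _)

lemma cfValB_le (a : ℤ → ℕ) (ha : ∀ n, 0 < a n) (k : ℤ) :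
    cfVal (fun n : ℕ => a (k - 1 - n)) ≤ (a (k - 1) : ℝ) + 1 := by
  simpa using cfVal_le_head (fun n : ℕ => a (k - 1 - n)) (fun i => ha _)

lemma cfValB_pos (a : ℤ → ℕ) (ha : ∀ n, 0 < a n) (k : ℤ) :
    0 < cfVal (fun n : ℕ => a (k - 1 - n)) := cfVal_pos _ (fun i => ha _)

/-- A bi-infinite sequence of positive integers has Markov value at most `√12` iff all of
its entries lie in {1,2}; moreover a periodic sequence containing the digit 3 has Markov
value at least `√13 > √12`. -/
theorem markov_le_sqrt12_iff (a : ℤ → ℕ) (ha : ∀ n, 0 < a n) :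
    ((∀ k, lam a k ≤ Real.sqrt 12) → ∀ n, a n = 1 ∨ a n = 2) ∧
    ((∀ n, a n = 1 ∨ a n = 2) → ∀ k, lam a k ≤ Real.sqrt 12) ∧
    ((∃ p : ℤ, 0 < p ∧ ∀ n, a (n + p) = a n) → (∃ n, a n = 3) →
      (∀ t : ℝ, (∀ k, lam a k ≤ t) → Real.sqrt 13 ≤ t) ∧
      Real.sqrt 12 < Real.sqrt 13) := by
  have hs3 : Real.sqrt 3 ^ 2 = 3 := Real.sq_sqrt (by norm_num)
  have hs3n : (0:ℝ) ≤ Real.sqrt 3 := Real.sqrt_nonneg 3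
  have hs31 : (1:ℝ) ≤ Real.sqrt 3 := by nlinarith
  have hs12 : Real.sqrt 12 = 2 * Real.sqrt 3 := by
    rw [show (12:ℝ) = 2^2 * 3 by norm_num, Real.sqrt_mul (by positivity),
      Real.sqrt_sq (by norm_num)]
  have hs12lt : Real.sqrt 12 < 3.5 := by
    rw [hs12]; nlinarith
  refine ⟨?_, ?_, ?_⟩
  · -- part 1
    intro h n
    have hle3 : ∀ k, a k ≤ 3 := by
      intro k
      by_contra hgt
      push_neg at hgt
      have h4 : (4:ℝ) ≤ (a k : ℝ) := by exact_mod_cast hgt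
      have hF := cfValF_ge a ha k
      have hBpos := cfValB_pos a ha k
      have hk := h k
      simp only [lam] at hk
      have : (0:ℝ) < (cfVal (fun n : ℕ => a (k - 1 - n)))⁻¹ := by positivity
      linarith
    by_contra hcon
    push_neg at hcon
    have h3n : a n = 3 := by
      have := ha n; have := hle3 n; omega
    have hrecF := cfValF_rec a ha n
    have hF1ub : cfVal (fun m : ℕ => a (n + 1 + m)) ≤ 4 := by
      have h1 := cfValF_le a ha (n+1)
      have h2 : ((a (n+1) : ℝ)) ≤ 3 := by exact_mod_cast hle3 (n+1)
      linarith
    have hF1pos := cfValF_pos a ha (n+1)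
    have hFlb : (3:ℝ) + 1/4 ≤ cfVal (fun m : ℕ => a (n + m)) := by
      rw [hrecF, h3n]
      have : (1/4:ℝ) ≤ 1 / cfVal (fun m : ℕ => a (n + 1 + m)) :=
        one_div_le_one_div_of_le hF1pos hF1ub
      push_cast
      linarith
    have hBub : cfVal (fun m : ℕ => a (n - 1 - m)) ≤ 4 := by
      have h1 := cfValB_le a ha n
      have h2 : ((a (n-1) : ℝ)) ≤ 3 := by exact_mod_cast hle3 (n-1)
      linarith
    have hBpos := cfValB_pos a ha n
    have hBinv : (1/4:ℝ) ≤ (cfVal (fun m : ℕ => a (n - 1 - m)))⁻¹ := by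
      rw [inv_eq_one_div]
      exact one_div_le_one_div_of_le hBpos hBub
    have hn := h n
    simp only [lam] at hn
    linarith
  · -- part 2
    intro hb k
    have hFub : cfVal (fun n : ℕ => a (k + n)) ≤ 1 + Real.sqrt 3 :=
      cfVal_onetwo_ub _ (fun n => hb _)
    have hBlb : (1 + Real.sqrt 3)/2 ≤ cfVal (fun n : ℕ => a (k - 1 - n)) :=
      cfVal_onetwo_lb _ (fun n => hb _)
    have hBpos := cfValB_pos a ha k
    have hBinv : (cfVal (fun n : ℕ => a (k - 1 - n)))⁻¹ ≤ Real.sqrt 3 - 1 := by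
      rw [inv_eq_one_div, div_le_iff₀ hBpos]
      nlinarith
    simp only [lam]
    rw [hs12]
    linarith
  · -- part 3
    rintro ⟨p, hp, hper⟩ ⟨n0, hn0⟩
    constructor
    · intro t ht
      by_cases hle3 : ∀ k, a k ≤ 3
      · by_cases hall : ∀ k, a k = 3
        · -- constant 3
          have hconstF : (fun n : ℕ => a ((0:ℤ) + n)) = (fun _ : ℕ => 3) := by
            funext n; exact hall _
          have hconstB : (fun n : ℕ => a ((0:ℤ) - 1 - n)) = (fun _ : ℕ => 3) := by
            funext n; exact hall _
          have hrec : cfVal (fun _ : ℕ => 3) = 3 + 1/cfVal (fun _ : ℕ => 3) := by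
            have := cfVal_rec (fun _ : ℕ => 3) (fun _ => by norm_num)
            simpa using this
          set x := cfVal (fun _ : ℕ => 3) with hxdef
          have hx3 : (3:ℝ) ≤ x := by
            have := head_le_cfVal (fun _ : ℕ => 3) (fun _ => by norm_num)
            simpa using this
          have hx0 : (0:ℝ) < x := by linarith
          have h1x : 1/x = x - 3 := by linarith
          have hxx : (1:ℝ) = (x - 3) * x := (div_eq_iff (ne_of_gt hx0)).1 h1x
          have h13 : ((2*x - 3)^2 : ℝ) = 13 := by nlinarith
          have hsq13 : Real.sqrt 13 = 2*x - 3 := by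
            rw [← h13, Real.sqrt_sq (by linarith)]
          have hlam : lam a 0 = 2*x - 3 := by
            simp only [lam]
            rw [hconstF, hconstB, ← hxdef, inv_eq_one_div, h1x]
            ring
          have := ht 0
          rw [hlam] at this
          linarith [hsq13 ▸ this]
        · -- mixed: find i with a i = 3, a (i+1) ≠ 3
          push_neg at hall
          obtain ⟨m, hm⟩ := hall
          have hmix : ∃ i, a i = 3 ∧ a (i+1) ≠ 3 := by
            by_contra hc
            push_neg at hc
            apply hm
            have fwd : ∀ j : ℕ, a (n0 + j) = 3 := by
              intro j
              induction j with
              | zero => simpa using hn0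
              | succ j ih =>
                have h := hc _ ih
                have e : n0 + ((j+1 : ℕ) : ℤ) = (n0 + j) + 1 := by push_cast; ring
                rw [e]; exact h
            have per : ∀ k : ℕ, a (m + k * p) = a m := by
              intro k
              induction k with
              | zero => simp
              | succ k ih =>
                have e : m + ((k+1 : ℕ) : ℤ) * p = (m + k * p) + p := by push_cast; ring
                rw [e, hper, ih]
            set k : ℕ := (n0 - m).toNat with hk
            have hkp : n0 ≤ m + (k:ℤ) * p := by
              have h1 : n0 - m ≤ (k:ℤ) := Int.self_le_toNat _
              have h2 : (k:ℤ) ≤ (k:ℤ) * p := le_mul_of_one_le_right (Int.ofNat_nonneg k) hp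
              linarith
            set j : ℕ := (m + (k:ℤ)*p - n0).toNat with hj
            have hje : n0 + (j:ℤ) = m + (k:ℤ)*p := by
              have := Int.toNat_of_nonneg (by linarith : (0:ℤ) ≤ m + (k:ℤ)*p - n0)
              omega
            have h3 := fwd j
            rw [hje] at h3
            rw [← per k]
            exact h3
          obtain ⟨i, hi3, hi1⟩ := hmix
          have hi1' : (a (i+1) : ℝ) ≤ 2 := by
            have := hle3 (i+1); have := ha (i+1)
            have : a (i+1) ≤ 2 := by omega
            exact_mod_cast this
          have hrecF := cfValF_rec a ha i
          have hrecF1 := cfValF_rec a ha (i+1)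
          have hF2lb : (24/19 : ℝ) ≤ cfVal (fun n : ℕ => a (i + 1 + 1 + n)) :=
            cfVal_ge_of_le3 _ (fun j => ha _) (fun j => hle3 _)
          have hF2pos : (0:ℝ) < cfVal (fun n : ℕ => a (i + 1 + 1 + n)) := by linarith
          have hF1ub : cfVal (fun n : ℕ => a (i + 1 + n)) ≤ 67/24 := by
            rw [hrecF1]
            have : 1 / cfVal (fun n : ℕ => a (i + 1 + 1 + n)) ≤ 19/24 := by
              rw [div_le_div_iff₀ hF2pos (by norm_num)]
              linarith
            linarith
          have hF1pos := cfValF_pos a ha (i+1)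
          have hFlb : (3:ℝ) + 24/67 ≤ cfVal (fun n : ℕ => a (i + n)) := by
            rw [hrecF, hi3]
            have : (24/67 : ℝ) ≤ 1 / cfVal (fun n : ℕ => a (i + 1 + n)) := by
              rw [div_le_div_iff₀ (by norm_num) hF1pos]
              linarith
            push_cast
            linarith
          have hrecB := cfValB_rec a ha i
          have hBlb2 : (24/19 : ℝ) ≤ cfVal (fun n : ℕ => a (i - 1 - 1 - n)) :=
            cfVal_ge_of_le3 _ (fun j => ha _) (fun j => hle3 _)
          have hBub : cfVal (fun n : ℕ => a (i - 1 - n)) ≤ 91/24 := by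
            rw [hrecB]
            have h2 : ((a (i-1) : ℝ)) ≤ 3 := by exact_mod_cast hle3 (i-1)
            have : 1 / cfVal (fun n : ℕ => a (i - 1 - 1 - n)) ≤ 19/24 := by
              rw [div_le_div_iff₀ (by linarith) (by norm_num)]
              linarith
            linarith
          have hBpos := cfValB_pos a ha i
          have hBinv : (24/91 : ℝ) ≤ (cfVal (fun n : ℕ => a (i - 1 - n)))⁻¹ := by
            rw [inv_eq_one_div, div_le_div_iff₀ (by norm_num) hBpos]
            linarith
          have hlami : (3:ℝ) + 24/67 + 24/91 ≤ lam a i := by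
            simp only [lam]
            linarith
          have hsq : Real.sqrt 13 ≤ 3 + 24/67 + 24/91 := by
            have h1 : Real.sqrt 13 ≤ Real.sqrt ((3 + 24/67 + 24/91)^2) :=
              Real.sqrt_le_sqrt (by norm_num)
            rwa [Real.sqrt_sq (by norm_num)] at h1
          exact hsq.trans (hlami.trans (ht i))
      · -- some digit ≥ 4
        push_neg at hle3
        obtain ⟨k, hk⟩ := hle3
        have h4 : (4:ℝ) ≤ (a k : ℝ) := by exact_mod_cast hk
        have hF := cfValF_ge a ha k
        have hBpos := cfValB_pos a ha k
        have hlamk : (4:ℝ) ≤ lam a k := by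
          simp only [lam]
          have : (0:ℝ) < (cfVal (fun n : ℕ => a (k - 1 - n)))⁻¹ := by positivity
          linarith
        have hsq : Real.sqrt 13 ≤ 4 := by
          have h1 : Real.sqrt 13 ≤ Real.sqrt (4^2) := Real.sqrt_le_sqrt (by norm_num)
          rwa [Real.sqrt_sq (by norm_num)] at h1
        exact hsq.trans (hlamk.trans (ht k))
    · exact Real.sqrt_lt_sqrt (by norm_num) (by norm_num)
end

section
/- Every element t of the Markov spectrum is attained at position zero: if t = m(b) < ∞ for some b ∈ (ℕ*)^ℤ, then there exists a bi-infinite sequence a ∈ (ℕ*)^ℤ with t = m(a) = λ_0(a). -/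
open Filter
open Topology

lemma cfConv_bounds (n : ℕ) : ∀ (a : ℕ → ℕ), (∀ i, 0 < a i) →
    (a 0 : ℝ) ≤ cfConv n a ∧ cfConv n a ≤ a 0 + 1 := by
  induction n with
  | zero => intro a ha; simp [cfConv]
  | succ n ih =>
    intro a ha
    have h := ih (fun i => a (i+1)) (fun i => ha _)
    have h1 : (1:ℝ) ≤ cfConv n (fun i => a (i+1)) := by
      have : (1:ℝ) ≤ (a 1 : ℝ) := by exact_mod_cast ha 1
      linarith [h.1]
    have hpos : (0:ℝ) < cfConv n (fun i => a (i+1)) := by linarith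
    constructor
    · have : 0 < 1 / cfConv n (fun i => a (i+1)) := by positivity
      simp only [cfConv]; linarith
    · have : 1 / cfConv n (fun i => a (i+1)) ≤ 1 := by
        rw [div_le_one hpos]; exact h1
      simp only [cfConv]; linarith

lemma one_le_cfConv_s8 (n : ℕ) (a : ℕ → ℕ) (ha : ∀ i, 0 < a i) : (1:ℝ) ≤ cfConv n a := by
  have := (cfConv_bounds n a ha).1
  have h0 : (1:ℝ) ≤ (a 0 : ℝ) := by exact_mod_cast ha 0
  linarith

lemma inv_diff_le_one {x y : ℝ} (hx : 1 ≤ x) (hy : 1 ≤ y) : |1/x - 1/y| ≤ 1 := by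
  have hx0 : 0 < x := by linarith
  have hy0 : 0 < y := by linarith
  have h1 : 1/x ≤ 1 := by rw [div_le_one hx0]; exact hx
  have h2 : 1/y ≤ 1 := by rw [div_le_one hy0]; exact hy
  have h3 : 0 < 1/x := by positivity
  have h4 : 0 < 1/y := by positivity
  rw [abs_sub_le_iff]; constructor <;> linarith

lemma inv_diff_le {x y : ℝ} (hx : 1 ≤ x) (hy : 1 ≤ y) : |1/x - 1/y| ≤ |x - y| := by
  have hx0 : 0 < x := by linarith
  have hy0 : 0 < y := by linarith
  have he : 1/x - 1/y = (y - x)/(x*y) := by field_simp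
  rw [he, abs_div, abs_sub_comm]
  rw [abs_of_pos (by positivity : (0:ℝ) < x*y)]
  apply div_le_self (abs_nonneg _)
  nlinarith

lemma contract {A x y : ℝ} (hA : 1 ≤ A) (hx : 1 ≤ x) (hy : 1 ≤ y) :
    |1/(A + 1/x) - 1/(A + 1/y)| ≤ |x - y| / 4 := by
  have hx0 : 0 < x := by linarith
  have hy0 : 0 < y := by linarith
  have hX : 0 < A + 1/x := by positivity
  have hY : 0 < A + 1/y := by positivity
  have hXx : 2 ≤ x * (A + 1/x) := by
    have : x * (A + 1/x) = A*x + 1 := by field_simp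
    rw [this]; nlinarith
  have hYy : 2 ≤ y * (A + 1/y) := by
    have : y * (A + 1/y) = A*y + 1 := by field_simp
    rw [this]; nlinarith
  have he : 1/(A + 1/x) - 1/(A + 1/y) = (x - y) / ((x*(A + 1/x)) * (y*(A + 1/y))) := by
    field_simp
    ring
  rw [he, abs_div, abs_of_pos (by nlinarith : (0:ℝ) < (x*(A + 1/x)) * (y*(A + 1/y)))]
  apply div_le_div_of_nonneg_left (abs_nonneg _) (by norm_num)
  nlinarith

lemma cfConv_key : ∀ (k : ℕ) (a a' : ℕ → ℕ) (n m : ℕ), (∀ i, 0 < a i) → (∀ i, 0 < a' i) →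
    (∀ i < k, a i = a' i) → k ≤ n → k ≤ m → 1 ≤ k →
    |cfConv n a - cfConv m a'| ≤ 2 * (1/2 : ℝ)^(k/2) := by
  intro k
  induction k using Nat.strong_induction_on with
  | _ k ih =>
  intro a a' n m ha ha' hag hkn hkm hk1
  match k, hk1 with
  | 1, _ =>
    obtain ⟨n1, rfl⟩ : ∃ n1, n = n1 + 1 := ⟨n - 1, by omega⟩
    obtain ⟨m1, rfl⟩ : ∃ m1, m = m1 + 1 := ⟨m - 1, by omega⟩
    have h0 : a 0 = a' 0 := hag 0 (by norm_num)
    simp only [cfConv, h0]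
    have hxx : ((a' 0 : ℝ) + 1 / cfConv n1 (fun i => a (i+1))) -
        ((a' 0 : ℝ) + 1 / cfConv m1 (fun i => a' (i+1))) =
        1 / cfConv n1 (fun i => a (i+1)) - 1 / cfConv m1 (fun i => a' (i+1)) := by ring
    rw [hxx]
    have := inv_diff_le_one (one_le_cfConv_s8 n1 (fun i => a (i+1)) (fun i => ha _))
      (one_le_cfConv_s8 m1 (fun i => a' (i+1)) (fun i => ha' _))
    norm_num at this ⊢
    linarith
  | 2, _ =>
    obtain ⟨n2, rfl⟩ : ∃ n2, n = n2 + 1 + 1 := ⟨n - 2, by omega⟩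
    obtain ⟨m2, rfl⟩ : ∃ m2, m = m2 + 1 + 1 := ⟨m - 2, by omega⟩
    have h0 : a 0 = a' 0 := hag 0 (by norm_num)
    have h1 : a 1 = a' 1 := hag 1 (by norm_num)
    simp only [cfConv, h0, h1, zero_add]
    have hxx : ∀ u v : ℝ, ((a' 0 : ℝ) + u) - ((a' 0 : ℝ) + v) = u - v := by intro u v; ring
    rw [hxx]
    set x := cfConv n2 (fun i => a (i+1+1)) with hxdef
    set y := cfConv m2 (fun i => a' (i+1+1)) with hydef
    have hx1 : (1:ℝ) ≤ x := one_le_cfConv_s8 _ _ (fun i => ha _)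
    have hy1 : (1:ℝ) ≤ y := one_le_cfConv_s8 _ _ (fun i => ha' _)
    have hA1 : (1:ℝ) ≤ (a' 1 : ℝ) := by exact_mod_cast ha' 1
    have hX1 : (1:ℝ) ≤ (a' 1 : ℝ) + 1/x := by
      have : 0 < 1/x := by positivity
      linarith
    have hY1 : (1:ℝ) ≤ (a' 1 : ℝ) + 1/y := by
      have : 0 < 1/y := by positivity
      linarith
    have hd : |1/((a' 1 : ℝ) + 1/x) - 1/((a' 1 : ℝ) + 1/y)| ≤
        |((a' 1 : ℝ) + 1/x) - ((a' 1 : ℝ) + 1/y)| := inv_diff_le hX1 hY1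
    have hd2 : ((a' 1 : ℝ) + 1/x) - ((a' 1 : ℝ) + 1/y) = 1/x - 1/y := by ring
    have hd3 : |1/x - 1/y| ≤ 1 := inv_diff_le_one hx1 hy1
    rw [hd2] at hd
    have hfin : |1/((a' 1 : ℝ) + 1/x) - 1/((a' 1 : ℝ) + 1/y)| ≤ 1 := le_trans hd hd3
    calc |1/((a' 1 : ℝ) + 1/x) - 1/((a' 1 : ℝ) + 1/y)| ≤ 1 := hfin
    _ ≤ 2 * (1/2 : ℝ)^(2/2) := by norm_num
  | (j+3), _ =>
    obtain ⟨n2, rfl⟩ : ∃ n2, n = n2 + 1 + 1 := ⟨n - 2, by omega⟩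
    obtain ⟨m2, rfl⟩ : ∃ m2, m = m2 + 1 + 1 := ⟨m - 2, by omega⟩
    have h0 : a 0 = a' 0 := hag 0 (by omega)
    have h1 : a 1 = a' 1 := hag 1 (by omega)
    have hIH := ih (j+1) (by omega) (fun i => a (i+1+1)) (fun i => a' (i+1+1)) n2 m2
      (fun i => ha _) (fun i => ha' _) (fun i hi => hag (i+1+1) (by omega))
      (by omega) (by omega) (by omega)
    simp only [cfConv, h0, h1, zero_add]
    have hxx : ∀ u v : ℝ, ((a' 0 : ℝ) + u) - ((a' 0 : ℝ) + v) = u - v := by intro u v; ring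
    rw [hxx]
    set x := cfConv n2 (fun i => a (i+1+1)) with hxdef
    set y := cfConv m2 (fun i => a' (i+1+1)) with hydef
    have hx1 : (1:ℝ) ≤ x := one_le_cfConv_s8 _ _ (fun i => ha _)
    have hy1 : (1:ℝ) ≤ y := one_le_cfConv_s8 _ _ (fun i => ha' _)
    have hA1 : (1:ℝ) ≤ (a' 1 : ℝ) := by exact_mod_cast ha' 1
    have hc := contract hA1 hx1 hy1
    have hstep : |x - y| / 4 ≤ (2 * (1/2 : ℝ)^((j+1)/2)) / 4 := by
      apply div_le_div_of_nonneg_right ?_ (by norm_num)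
      exact hIH
    have hpow : (2 * (1/2 : ℝ)^((j+1)/2)) / 4 ≤ 2 * (1/2 : ℝ)^((j+3)/2) := by
      have he : (j+3)/2 = (j+1)/2 + 1 := by omega
      have hp : (0:ℝ) ≤ (1/2 : ℝ)^((j+1)/2) := by positivity
      rw [he, pow_succ]
      nlinarith
    calc |1/((a' 1 : ℝ) + 1/x) - 1/((a' 1 : ℝ) + 1/y)| ≤ |x - y| / 4 := hc
    _ ≤ (2 * (1/2 : ℝ)^((j+1)/2)) / 4 := hstep
    _ ≤ 2 * (1/2 : ℝ)^((j+3)/2) := hpow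

lemma bound_tendsto : Tendsto (fun K : ℕ => (2:ℝ) * (1/2)^(K/2)) atTop (𝓝 0) := by
  have h1 : Tendsto (fun K : ℕ => K / 2) atTop atTop :=
    tendsto_atTop_atTop.2 fun b => ⟨2*b, fun n hn => by omega⟩
  have h2 : Tendsto (fun m : ℕ => ((1:ℝ)/2)^m) atTop (𝓝 0) :=
    tendsto_pow_atTop_nhds_zero_of_lt_one (by norm_num) (by norm_num)
  have h3 := (h2.comp h1).const_mul (2:ℝ)
  simpa using h3

lemma bound4_tendsto : Tendsto (fun K : ℕ => (4:ℝ) * (1/2)^(K/2)) atTop (𝓝 0) := by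
  have h : Tendsto (fun K : ℕ => (2:ℝ) * (2 * (1/2)^(K/2))) atTop (𝓝 ((2:ℝ) * 0)) :=
    bound_tendsto.const_mul (2:ℝ)
  have he : (fun K : ℕ => (2:ℝ) * (2 * (1/2)^(K/2))) = fun K : ℕ => (4:ℝ) * (1/2)^(K/2) := by
    funext K; ring
  rw [he] at h
  simpa using h

lemma cfConv_tendsto (a : ℕ → ℕ) (ha : ∀ i, 0 < a i) :
    Tendsto (fun n => cfConv n a) atTop (𝓝 (cfVal a)) := by
  have hcauchy : CauchySeq (fun n => cfConv n a) := by
    apply cauchySeq_of_le_tendsto_0 (fun N => 2 * (1/2 : ℝ)^(N/2))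
    · intro n m N hn hm
      rw [Real.dist_eq]
      rcases Nat.eq_zero_or_pos N with h | h
      · subst h
        have h1 := cfConv_bounds n a ha
        have h2 := cfConv_bounds m a ha
        rw [abs_sub_le_iff]
        norm_num
        constructor <;> linarith [h1.1, h1.2, h2.1, h2.2]
      · exact cfConv_key N a a n m ha ha (fun i _ => rfl) hn hm h
    · exact bound_tendsto
  obtain ⟨l, hl⟩ := cauchySeq_tendsto_of_complete hcauchy
  rw [cfVal, hl.limUnder_eq]
  exact hl

lemma cfVal_bounds (a : ℕ → ℕ) (ha : ∀ i, 0 < a i) :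
    (a 0 : ℝ) ≤ cfVal a ∧ cfVal a ≤ a 0 + 1 := by
  constructor
  · exact ge_of_tendsto (cfConv_tendsto a ha)
      (Eventually.of_forall fun n => (cfConv_bounds n a ha).1)
  · exact le_of_tendsto (cfConv_tendsto a ha)
      (Eventually.of_forall fun n => (cfConv_bounds n a ha).2)

lemma one_le_cfVal_s8 (a : ℕ → ℕ) (ha : ∀ i, 0 < a i) : (1:ℝ) ≤ cfVal a := by
  have := (cfVal_bounds a ha).1
  have h0 : (1:ℝ) ≤ (a 0 : ℝ) := by exact_mod_cast ha 0
  linarith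

lemma cfVal_close (k : ℕ) (hk : 1 ≤ k) (a a' : ℕ → ℕ) (ha : ∀ i, 0 < a i)
    (ha' : ∀ i, 0 < a' i) (hag : ∀ i < k, a i = a' i) :
    |cfVal a - cfVal a'| ≤ 2 * (1/2 : ℝ)^(k/2) := by
  have ht : Tendsto (fun n => |cfConv n a - cfConv n a'|) atTop (𝓝 |cfVal a - cfVal a'|) :=
    ((cfConv_tendsto a ha).sub (cfConv_tendsto a' ha')).abs
  apply le_of_tendsto ht
  filter_upwards [eventually_ge_atTop k] with n hn
  exact cfConv_key k a a' n n ha ha' hag hn hn hk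

lemma lam_close (a a' : ℤ → ℕ) (ha : ∀ i, 0 < a i) (ha' : ∀ i, 0 < a' i) (k : ℕ)
    (hk : 1 ≤ k) (m : ℤ)
    (hag : ∀ i : ℤ, m - k ≤ i → i ≤ m + k → a i = a' i) :
    |lam a m - lam a' m| ≤ 4 * (1/2 : ℝ)^(k/2) := by
  have hfwd : |cfVal (fun n => a (m + n)) - cfVal (fun n => a' (m + n))| ≤
      2 * (1/2 : ℝ)^(k/2) := by
    apply cfVal_close k hk _ _ (fun i => ha _) (fun i => ha' _)
    intro i hi
    exact hag (m + i) (by omega) (by omega)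
  have hbwd : |cfVal (fun n => a (m - 1 - n)) - cfVal (fun n => a' (m - 1 - n))| ≤
      2 * (1/2 : ℝ)^(k/2) := by
    apply cfVal_close k hk _ _ (fun i => ha _) (fun i => ha' _)
    intro i hi
    exact hag (m - 1 - i) (by omega) (by omega)
  set x := cfVal (fun n => a (m - 1 - n)) with hxd
  set y := cfVal (fun n => a' (m - 1 - n)) with hyd
  have hx1 : (1:ℝ) ≤ x := one_le_cfVal_s8 _ (fun i => ha _)
  have hy1 : (1:ℝ) ≤ y := one_le_cfVal_s8 _ (fun i => ha' _)
  have hinv : |x⁻¹ - y⁻¹| ≤ |x - y| := by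
    have := inv_diff_le hx1 hy1
    simpa [one_div] using this
  have hinv2 : |x⁻¹ - y⁻¹| ≤ 2 * (1/2 : ℝ)^(k/2) := le_trans hinv hbwd
  have hsplit : lam a m - lam a' m =
      (cfVal (fun n => a (m + n)) - cfVal (fun n => a' (m + n))) + (x⁻¹ - y⁻¹) := by
    simp only [lam]; ring
  rw [hsplit]
  calc |(cfVal (fun n => a (m + n)) - cfVal (fun n => a' (m + n))) + (x⁻¹ - y⁻¹)|
      ≤ |cfVal (fun n => a (m + n)) - cfVal (fun n => a' (m + n))| + |x⁻¹ - y⁻¹| :=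
        abs_add_le _ _
    _ ≤ 2 * (1/2 : ℝ)^(k/2) + 2 * (1/2 : ℝ)^(k/2) := add_le_add hfwd hinv2
    _ = 4 * (1/2 : ℝ)^(k/2) := by ring

lemma lam_lower (a : ℤ → ℕ) (ha : ∀ i, 0 < a i) (m : ℤ) : (a m : ℝ) ≤ lam a m := by
  have h1 : ((a m : ℝ)) ≤ cfVal (fun n : ℕ => a (m + n)) := by
    have h := (cfVal_bounds (fun n : ℕ => a (m + n)) (fun i => ha _)).1
    simpa using h
  have h2 : (1:ℝ) ≤ cfVal (fun n : ℕ => a (m - 1 - n)) := one_le_cfVal_s8 _ (fun i => ha _)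
  have h3 : (0:ℝ) ≤ (cfVal (fun n : ℕ => a (m - 1 - n)))⁻¹ := by positivity
  simp only [lam]
  linarith

lemma one_le_lam (a : ℤ → ℕ) (ha : ∀ i, 0 < a i) (m : ℤ) : (1:ℝ) ≤ lam a m := by
  have := lam_lower a ha m
  have h0 : (1:ℝ) ≤ (a m : ℝ) := by exact_mod_cast ha m
  linarith

lemma lam_shift (b : ℤ → ℕ) (c m : ℤ) : lam (fun n => b (n + c)) m = lam b (m + c) := by
  simp only [lam]
  congr 2
  · funext n; congr 1; ring
  · congr 1
    funext n; congr 1; ring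

/-- Every element of the Markov spectrum is attained at position zero: if `t = m(b) < ∞`
for some positive bi-infinite sequence `b`, then there is a positive bi-infinite sequence
`a` with `t = m(a) = λ₀(a)`. -/
theorem markov_value_attained (b : ℤ → ℕ) (hb : ∀ n, 0 < b n)
    (hbdd : BddAbove (Set.range (lam b))) :
    ∃ a : ℤ → ℕ, (∀ n, 0 < a n) ∧ BddAbove (Set.range (lam a)) ∧
      markov a = markov b ∧ lam a 0 = markov b := by
  set t := markov b with ht
  have hrange : (Set.range (lam b)).Nonempty := ⟨lam b 0, ⟨0, rfl⟩⟩
  have hub : ∀ k : ℤ, lam b k ≤ t := fun k => le_ciSup hbdd k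
  have ht1 : (1:ℝ) ≤ t := le_trans (one_le_lam b hb 0) (hub 0)
  -- a monotone sequence in the range tending to the sup
  obtain ⟨u, hu_mono, hu_tendsto, hu_mem⟩ := exists_seq_tendsto_sSup hrange hbdd
  have hsSup : sSup (Set.range (lam b)) = t := rfl
  rw [hsSup] at hu_tendsto
  choose kk hkk using fun j => Set.mem_range.mp (hu_mem j)
  -- entries of b are bounded by ⌊t⌋
  set M := Nat.floor t with hM
  have hbM : ∀ n : ℤ, b n < M + 1 := by
    intro n
    have h1 : (b n : ℝ) ≤ t := le_trans (lam_lower b hb n) (hub n)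
    have := Nat.le_floor h1
    omega
  -- shifted sequences as elements of a compact space
  set B : ℕ → ℤ → Fin (M+1) := fun j i => ⟨b (i + kk j), hbM _⟩ with hB
  obtain ⟨A, -, φ, hφ, hA⟩ := IsCompact.tendsto_subseq (x := B)
    (isCompact_univ (X := ℤ → Fin (M+1))) (fun j => Set.mem_univ _)
  have hptw : ∀ i : ℤ, ∀ᶠ j in atTop, b (i + kk (φ j)) = (A i : ℕ) := by
    intro i
    have h1 : Tendsto (fun j => B (φ j) i) atTop (𝓝 (A i)) := by
      have := tendsto_pi_nhds.mp hA i
      exact this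
    rw [show (𝓝 (A i)) = pure (A i) by rw [nhds_discrete]] at h1
    have h2 := tendsto_pure.mp h1
    filter_upwards [h2] with j hj
    exact congrArg Fin.val hj
  set aa : ℤ → ℕ := fun i => (A i : ℕ) with haa
  have haa_pos : ∀ i, 0 < aa i := by
    intro i
    obtain ⟨j, hj⟩ := (hptw i).exists
    show 0 < (A i : ℕ)
    rw [← hj]
    exact hb _
  -- approximation of lam aa at every position
  have happrox : ∀ (m : ℤ) (K : ℕ), 1 ≤ K →
      ∀ᶠ j in atTop, |lam aa m - lam b (m + kk (φ j))| ≤ 4 * (1/2 : ℝ)^(K/2) := by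
    intro m K hK
    have hfin : ∀ᶠ j in atTop, ∀ i ∈ Set.Icc (m - (K:ℤ)) (m + K), aa i = b (i + kk (φ j)) := by
      rw [eventually_all_finite (Set.finite_Icc _ _)]
      intro i _
      filter_upwards [hptw i] with j hj
      exact hj.symm
    filter_upwards [hfin] with j hj
    have hclose := lam_close aa (fun i => b (i + kk (φ j))) haa_pos (fun i => hb _) K hK m
      (fun i h1 h2 => hj i ⟨h1, h2⟩)
    rwa [lam_shift b (kk (φ j)) m] at hclose
  -- all lam aa values are ≤ t
  have hle : ∀ m : ℤ, lam aa m ≤ t := by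
    intro m
    have hbnd : ∀ K : ℕ, 1 ≤ K → lam aa m ≤ t + 4 * (1/2 : ℝ)^(K/2) := by
      intro K hK
      obtain ⟨j, hj⟩ := (happrox m K hK).exists
      have h1 : lam aa m - lam b (m + kk (φ j)) ≤ 4 * (1/2 : ℝ)^(K/2) :=
        le_trans (le_abs_self _) hj
      have h2 := hub (m + kk (φ j))
      linarith
    have hlim : Tendsto (fun K : ℕ => t + 4 * (1/2 : ℝ)^(K/2)) atTop (𝓝 (t + 0)) :=
      tendsto_const_nhds.add bound4_tendsto
    rw [add_zero] at hlim
    apply ge_of_tendsto hlim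
    filter_upwards [eventually_ge_atTop 1] with K hK
    exact hbnd K hK
  -- lam aa 0 = t
  have h0eq : lam aa 0 = t := by
    have hsub : Tendsto (fun j => lam b ((0:ℤ) + kk (φ j))) atTop (𝓝 t) := by
      have h1 : Tendsto (fun j => u (φ j)) atTop (𝓝 t) :=
        hu_tendsto.comp hφ.tendsto_atTop
      have h2 : (fun j => lam b ((0:ℤ) + kk (φ j))) = fun j => u (φ j) := by
        funext j
        rw [zero_add, hkk]
      rw [h2]
      exact h1
    have habs : ∀ K : ℕ, 1 ≤ K → |lam aa 0 - t| ≤ 4 * (1/2 : ℝ)^(K/2) := by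
      intro K hK
      have ht2 : Tendsto (fun j => |lam aa 0 - lam b ((0:ℤ) + kk (φ j))|) atTop
          (𝓝 |lam aa 0 - t|) := (tendsto_const_nhds.sub hsub).abs
      exact le_of_tendsto ht2 (happrox 0 K hK)
    have hfinal : |lam aa 0 - t| ≤ 0 := by
      apply ge_of_tendsto bound4_tendsto
      filter_upwards [eventually_ge_atTop 1] with K hK
      exact habs K hK
    have h3 : lam aa 0 - t = 0 := by
      have h4 : |lam aa 0 - t| = 0 := le_antisymm hfinal (abs_nonneg _)
      exact abs_eq_zero.mp h4
    linarith
  -- conclude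
  have hbdd_a : BddAbove (Set.range (lam aa)) := by
    refine ⟨t, ?_⟩
    rintro _ ⟨m, rfl⟩
    exact hle m
  refine ⟨aa, haa_pos, hbdd_a, ?_, h0eq⟩
  apply le_antisymm
  · exact ciSup_le hle
  · rw [← h0eq]
    exact le_ciSup hbdd_a 0
end
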